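/- arXiv:1912.01753 — 7 statements merged into one kernel-verified Lean document; each statement's English description precedes it below -/
import Mathlib

section
/- If f ∈ L²(𝕋; ℂ) satisfies ∫_{𝕋×𝕋} R(k,k')·|f(k) − f(k')|² dk dk' = 0, then f is almost everywhere equal to a constant. -/
noncomputable section
open Real MeasureTheory

/-- The function `r(k,k')` from the stochastic perturbation. -/
def rfun (k k' : ℝ) : ℝ :=
  2 * sin (π * k) ^ 2 * sin (2 * π * (k - k')) + sin (2 * π * k) * sin (π * (k - k')) ^ 2

/-- The scattering kernel `R(k,k') = (1/2)[r(k,k+k')² + r(k,k-k')²]`. -/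
def Rker (k k' : ℝ) : ℝ := (1 / 2) * (rfun k (k + k') ^ 2 + rfun k (k - k') ^ 2)

/-- The torus `𝕋`, identified with `[-1/2, 1/2)`. -/
def T : Set ℝ := Set.Ico (-(1 : ℝ) / 2) (1 / 2)

/-- Lebesgue measure on the torus. -/
def μT : Measure ℝ := volume.restrict T

/-!
Since `R ≥ 0` is bounded and `f ∈ L²`, the vanishing double integral forces
`R(k,k') |f k - f k'|² = 0` for a.e. `(k,k')`. The zero set of `R` is null: for `sin (π k) ≠ 0`
the slice `k' ↦ R(k,k')` is real-analytic and positive at `k' = 1/4`, so its zeros are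
discrete. Hence `f k = f k'` for a.e. `(k,k')`, and `f` agrees a.e. with its value at a
typical point.
-/

open Function

theorem AnalyticOnNhd.ae_ne_zero {𝕜 E : Type*} [NontriviallyNormedField 𝕜] [ConnectedSpace 𝕜]
    [SecondCountableTopology 𝕜] [MeasurableSpace 𝕜] [NormedAddCommGroup E] [NormedSpace 𝕜 E]
    {μ : Measure 𝕜} [NullSingletonClass μ] {f : 𝕜 → E} {x : 𝕜}
    (hf : AnalyticOnNhd 𝕜 f Set.univ) (hx : f x ≠ 0) : ∀ᵐ y ∂μ, f y ≠ 0 := by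
  have h := ae_restrict_le_codiscreteWithin (μ := μ) MeasurableSet.univ
    (hf.preimage_zero_mem_codiscrete hx)
  rwa [Measure.restrict_univ] at h

theorem integrable_mul_norm_sub_sq {α E : Type*} [MeasurableSpace α] {μ : Measure α}
    [IsFiniteMeasure μ] [NormedAddCommGroup E] {f : α → E} {K : α × α → ℝ} {C : ℝ}
    (hf : MemLp f 2 μ) (hK : AEStronglyMeasurable K (μ.prod μ)) (hKC : ∀ p, ‖K p‖ ≤ C) :
    Integrable (fun p => K p * ‖f p.1 - f p.2‖ ^ 2) (μ.prod μ) :=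
  (((hf.comp_fst μ).sub (hf.comp_snd μ)).integrable_norm_pow two_ne_zero).bdd_mul hK
    (ae_of_all _ hKC)

theorem exists_ae_eq_const_of_ae_prod {α β : Type*} [MeasurableSpace α] {μ : Measure α}
    [SFinite μ] [NeZero μ] {f : α → β} (h : ∀ᵐ p ∂μ.prod μ, f p.1 = f p.2) :
    ∃ c, f =ᵐ[μ] fun _ => c := by
  have : (ae μ).NeBot := ae_neBot.mpr (NeZero.ne μ)
  obtain ⟨x, hx⟩ := (Measure.ae_ae_of_ae_prod h).exists
  exact ⟨f x, hx.mono fun _ hy => hy.symm⟩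

theorem exists_ae_eq_const_of_integral_kernel_eq_zero {α E : Type*} [MeasurableSpace α]
    {μ : Measure α} [IsFiniteMeasure μ] [NeZero μ] [NormedAddCommGroup E] {f : α → E}
    {K : α → α → ℝ} {C : ℝ} (hf : MemLp f 2 μ) (hK : AEStronglyMeasurable (uncurry K) (μ.prod μ))
    (hK_nonneg : ∀ x y, 0 ≤ K x y) (hK_le : ∀ x y, K x y ≤ C)
    (hK_ne : ∀ᵐ p ∂μ.prod μ, K p.1 p.2 ≠ 0)
    (h0 : ∫ x, ∫ y, K x y * ‖f x - f y‖ ^ 2 ∂μ ∂μ = 0) :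
    ∃ c, f =ᵐ[μ] fun _ => c := by
  have hint : Integrable (uncurry fun x y => K x y * ‖f x - f y‖ ^ 2) (μ.prod μ) :=
    integrable_mul_norm_sub_sq hf hK fun p => by
      rw [Real.norm_of_nonneg (hK_nonneg _ _)]; exact hK_le _ _
  have hzero : uncurry (fun x y => K x y * ‖f x - f y‖ ^ 2) =ᵐ[μ.prod μ] 0 :=
    (integral_eq_zero_iff_of_nonneg (fun p => mul_nonneg (hK_nonneg _ _) (by positivity)) hint).mp
      ((integral_integral hint).symm.trans h0)
  refine exists_ae_eq_const_of_ae_prod ?_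
  filter_upwards [hzero, hK_ne] with p hp hKp
  change K p.1 p.2 * ‖f p.1 - f p.2‖ ^ 2 = 0 at hp
  simpa [hKp, sub_eq_zero] using hp

lemma Rker_nonneg (k k' : ℝ) : 0 ≤ Rker k k' := by
  unfold Rker; positivity

lemma abs_rfun_le (k k' : ℝ) : |rfun k k'| ≤ 3 := by
  unfold rfun
  rw [abs_le]
  constructor <;>
    nlinarith [sin_sq_le_one (π * k), sin_sq_le_one (π * (k - k')), sq_nonneg (sin (π * k)),
      sq_nonneg (sin (π * (k - k'))), neg_one_le_sin (2 * π * (k - k')),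
      sin_le_one (2 * π * (k - k')), neg_one_le_sin (2 * π * k), sin_le_one (2 * π * k)]

lemma Rker_le_nine (k k' : ℝ) : Rker k k' ≤ 9 := by
  have h₁ := sq_le_sq.mpr ((abs_rfun_le k (k + k')).trans_eq (abs_of_nonneg zero_le_three).symm)
  have h₂ := sq_le_sq.mpr ((abs_rfun_le k (k - k')).trans_eq (abs_of_nonneg zero_le_three).symm)
  unfold Rker; linarith

lemma continuous_Rker : Continuous (uncurry Rker) := by
  unfold uncurry Rker rfun; fun_prop

lemma analyticOnNhd_Rker (k : ℝ) : AnalyticOnNhd ℝ (Rker k) Set.univ := by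
  intro x _; unfold Rker rfun; fun_prop

lemma Rker_one_div_four (k : ℝ) :
    Rker k (1 / 4) = 4 * sin (π * k) ^ 4 + sin (2 * π * k) ^ 2 / 4 := by
  have h₁ : sin (2 * π * (k - (k + 1 / 4))) = -1 := by
    rw [show 2 * π * (k - (k + 1 / 4)) = -(π / 2) by ring, sin_neg, sin_pi_div_two]
  have h₂ : sin (2 * π * (k - (k - 1 / 4))) = 1 := by
    rw [show 2 * π * (k - (k - 1 / 4)) = π / 2 by ring, sin_pi_div_two]
  have h₃ : sin (π * (k - (k + 1 / 4))) ^ 2 = 1 / 2 := by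
    rw [show π * (k - (k + 1 / 4)) = -(π / 4) by ring, sin_neg, neg_sq, sin_pi_div_four, div_pow,
      sq_sqrt zero_le_two]; norm_num
  have h₄ : sin (π * (k - (k - 1 / 4))) ^ 2 = 1 / 2 := by
    rw [show π * (k - (k - 1 / 4)) = π / 4 by ring, sin_pi_div_four, div_pow,
      sq_sqrt zero_le_two]; norm_num
  simp only [Rker, rfun, h₁, h₂, h₃, h₄]
  ring

lemma ae_Rker_ne_zero {μ ν : Measure ℝ} [NullSingletonClass μ] [NullSingletonClass ν]
    [SFinite ν] : ∀ᵐ p ∂μ.prod ν, Rker p.1 p.2 ≠ 0 := by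
  rw [Measure.ae_prod_iff_ae_ae ?meas]
  case meas => exact (continuous_Rker.measurable (measurableSet_singleton 0)).compl
  have hsin : ∀ᵐ k ∂μ, sin (π * k) ≠ 0 :=
    AnalyticOnNhd.ae_ne_zero (x := 1 / 2) (fun _ _ => by fun_prop)
      (by rw [mul_one_div, sin_pi_div_two]; exact one_ne_zero)
  filter_upwards [hsin] with k hk
  exact (analyticOnNhd_Rker k).ae_ne_zero (x := 1 / 4) (by rw [Rker_one_div_four]; positivity)

theorem stmt4 (f : ℝ → ℂ) (hf : MemLp f 2 μT)
    (h0 : (∫ k, ∫ k', Rker k k' * ‖f k - f k'‖ ^ 2 ∂μT ∂μT) = 0) :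
    ∃ c : ℂ, f =ᵐ[μT] fun _ => c := by
  have : IsFiniteMeasure μT := isFiniteMeasure_restrict.mpr (by simp [T])
  have : NeZero μT := ⟨by simp [μT, T, Measure.restrict_eq_zero]; norm_num⟩
  have : NullSingletonClass μT := by unfold μT; infer_instance
  exact exists_ae_eq_const_of_integral_kernel_eq_zero hf continuous_Rker.aestronglyMeasurable
    Rker_nonneg Rker_le_nine ae_Rker_ne_zero h0
end
end

section
/- Let 2 < θ < 3. There exists a constant K > 0 such that for all k ∈ (0, 1/2] one has |α̂(k) − C(θ)·k^{θ−1}| ≤ K·k², where C(θ) := 4π^{θ−1}·∫₀^∞ sin²(y)/y^θ dy. -/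
/-!
Write `p = πk` and `f t = sin² (p t) / t^θ`. Then `α̂(k) = 4 Σ_{n ≥ 1} f n`, while the substitution
`y = p t` gives `C(θ) k^{θ-1} = 4 ∫₀^∞ f`. On `(0, 1]` the integral is at most `p² / (3 - θ)`, since
`sin² (p t) ≤ p² t²`. On `[n, n + 1]`, `n ≥ 1`, the value `f n` differs from `∫ₙⁿ⁺¹ f` by at most
`sup |f'| ≤ (2 + θ) p² n^{1-θ}`, and these errors are summable because `θ > 2`. Both contributions
are therefore `O(p²) = O(k²)`.
-/

noncomputable section
open Real

/-- `α̂(k) = 4 Σ_{x≥1} sin²(πkx)/x^θ`, the Fourier transform of the long-range coupling. -/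
def ahat (θ k : ℝ) : ℝ := 4 * ∑' x : ℕ, sin (π * k * ((x : ℝ) + 1)) ^ 2 / ((x : ℝ) + 1) ^ θ

/-- `C(θ) = 4 π^{θ-1} ∫₀^∞ sin²(y)/y^θ dy` for `2 < θ < 3`. -/
def Cθ (θ : ℝ) : ℝ := 4 * π ^ (θ - 1) * ∫ y in Set.Ioi (0 : ℝ), sin y ^ 2 / y ^ θ

open MeasureTheory Set

theorem iUnion_Ioc_add_natCast (a : ℝ) : ⋃ n : ℕ, Ioc (a + n) (a + n + 1) = Ioi a := by
  refine subset_antisymm (iUnion_subset fun n x hx => ?_) fun x (hx : a < x) => ?_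
  · exact (le_add_of_nonneg_right n.cast_nonneg).trans_lt hx.1
  · obtain ⟨m, hm⟩ := mem_iUnion.1 ((iUnion_Ioc_add_intCast a).ge (mem_univ x))
    have hm0 : 0 ≤ m := by
      by_contra! h
      have : (m : ℝ) + 1 ≤ 0 := by exact_mod_cast h
      linarith [hm.2]
    lift m to ℕ using hm0
    exact mem_iUnion.2 ⟨m, by simpa using hm⟩

theorem pairwise_disjoint_Ioc_add_natCast (a : ℝ) :
    Pairwise (Function.onFun Disjoint fun n : ℕ => Ioc (a + n) (a + n + 1)) :=
  fun m n hmn => by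
    simpa using pairwise_disjoint_Ioc_add_intCast a (Nat.cast_injective.ne hmn)

theorem MeasureTheory.IntegrableOn.hasSum_intervalIntegral_add_natCast {E : Type*}
    [NormedAddCommGroup E] [NormedSpace ℝ E] {f : ℝ → E} {a : ℝ} (hf : IntegrableOn f (Ioi a)) :
    HasSum (fun n : ℕ => ∫ x in a + n..a + n + 1, f x) (∫ x in Ioi a, f x) := by
  simp_rw [intervalIntegral.integral_of_le (le_add_of_nonneg_right zero_le_one)]
  rw [← iUnion_Ioc_add_natCast a] at hf ⊢
  exact hasSum_integral_iUnion (fun _ => measurableSet_Ioc) (pairwise_disjoint_Ioc_add_natCast a) hf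

theorem abs_sub_intervalIntegral_le_of_abs_deriv_le {f f' : ℝ → ℝ} {a b C : ℝ} (hab : a ≤ b)
    (hf : ∀ t ∈ Icc a b, HasDerivWithinAt f (f' t) (Icc a b) t)
    (hf' : ∀ t ∈ Icc a b, |f' t| ≤ C) :
    |(b - a) * f a - ∫ t in a..b, f t| ≤ C * (b - a) * (b - a) := by
  have hcont : ContinuousOn f (Icc a b) := fun t ht => (hf t ht).continuousWithinAt
  have hdiff : ∀ t ∈ Icc a b, |f a - f t| ≤ C * (b - a) := fun t ht => by
    have := (convex_Icc a b).norm_image_sub_le_of_norm_hasDerivWithin_le hf hf' ht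
      (left_mem_Icc.2 hab)
    rw [Real.norm_eq_abs, Real.norm_eq_abs, abs_sub_comm a t, abs_of_nonneg (sub_nonneg.2 ht.1)]
      at this
    exact this.trans (mul_le_mul_of_nonneg_left (by linarith [ht.2])
      ((abs_nonneg _).trans (hf' a (left_mem_Icc.2 hab))))
  have hconst : (b - a) * f a = ∫ _ in a..b, f a := by simp
  rw [hconst, ← intervalIntegral.integral_sub intervalIntegrable_const
    (hcont.intervalIntegrable_of_Icc hab)]
  have := intervalIntegral.norm_integral_le_of_norm_le_const (f := fun t => f a - f t)
    fun t ht => hdiff t (Ioc_subset_Icc_self (uIoc_of_le hab ▸ ht))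
  rwa [Real.norm_eq_abs, abs_of_nonneg (sub_nonneg.2 hab)] at this

theorem abs_tsum_sub_integral_Ioi_le {f f' : ℝ → ℝ} {c : ℕ → ℝ} {a : ℝ}
    (hf : ∀ t, a ≤ t → HasDerivAt f (f' t) t)
    (hf' : ∀ (n : ℕ), ∀ t ∈ Icc (a + n) (a + n + 1), |f' t| ≤ c n) (hc : Summable c)
    (hint : IntegrableOn f (Ioi a)) :
    |∑' n : ℕ, f (a + n) - ∫ t in Ioi a, f t| ≤ ∑' n, c n := by
  set d : ℕ → ℝ := fun n => f (a + n) - ∫ t in a + n..a + n + 1, f t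
  have hd : ∀ n, ‖d n‖ ≤ c n := fun n => by
    have := abs_sub_intervalIntegral_le_of_abs_deriv_le (le_add_of_nonneg_right zero_le_one)
      (fun t ht => (hf t ((le_add_of_nonneg_right n.cast_nonneg).trans ht.1)).hasDerivWithinAt)
      (hf' n)
    simpa using this
  have hsum : HasSum (fun n : ℕ => f (a + n)) (∑' n, d n + ∫ t in Ioi a, f t) := by
    have hsplit : (fun n : ℕ => f (a + n)) = fun n => d n + ∫ t in a + n..a + n + 1, f t :=
      funext fun n => (sub_add_cancel _ _).symm
    rw [hsplit]
    exact (Summable.of_norm_bounded hc hd).hasSum.add hint.hasSum_intervalIntegral_add_natCast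
  rw [hsum.tsum_eq, add_sub_cancel_right]
  exact tsum_of_norm_bounded hc.hasSum hd

def sinSqDivRpow (θ p t : ℝ) : ℝ := sin (p * t) ^ 2 / t ^ θ

lemma sinSqDivRpow_nonneg (θ p : ℝ) {t : ℝ} (ht : 0 ≤ t) : 0 ≤ sinSqDivRpow θ p t :=
  div_nonneg (sq_nonneg _) (rpow_nonneg ht θ)

lemma sinSqDivRpow_le_rpow_neg (θ p : ℝ) {t : ℝ} (ht : 0 < t) :
    sinSqDivRpow θ p t ≤ t ^ (-θ) := by
  rw [rpow_neg ht.le, ← one_div]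
  exact div_le_div_of_nonneg_right (sin_sq_le_one _) (rpow_nonneg ht.le θ)

lemma sinSqDivRpow_le_sq_mul_rpow (θ p : ℝ) {t : ℝ} (ht : 0 < t) :
    sinSqDivRpow θ p t ≤ p ^ 2 * t ^ (2 - θ) := by
  rw [rpow_sub ht, rpow_two, ← mul_div_assoc, ← mul_pow]
  exact div_le_div_of_nonneg_right sin_sq_le_sq (rpow_nonneg ht.le θ)

lemma hasDerivAt_sinSqDivRpow (θ p : ℝ) {t : ℝ} (ht : 0 < t) :
    HasDerivAt (sinSqDivRpow θ p)
      (p * sin (2 * (p * t)) * t ^ (-θ) + sin (p * t) ^ 2 * (-θ * t ^ (-θ - 1))) t := by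
  have heq : (fun s => sin (p * s) ^ 2 * s ^ (-θ)) =ᶠ[nhds t] sinSqDivRpow θ p :=
    (eventually_gt_nhds ht).mono fun s hs => by
      rw [sinSqDivRpow, div_eq_mul_inv, ← rpow_neg hs.le]
  have hsin : HasDerivAt (fun s => sin (p * s) ^ 2) (p * sin (2 * (p * t))) t := by
    refine (((hasDerivAt_id t).const_mul p).sin.pow 2).congr_deriv ?_
    rw [sin_two_mul]
    simp only [id, mul_one]
    ring
  exact (hsin.mul (hasDerivAt_rpow_const (Or.inl ht.ne'))).congr_of_eventuallyEq heq.symm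

lemma abs_deriv_sinSqDivRpow_le {θ : ℝ} (hθ : 0 ≤ θ) (p : ℝ) {t : ℝ} (ht : 0 < t) :
    |p * sin (2 * (p * t)) * t ^ (-θ) + sin (p * t) ^ 2 * (-θ * t ^ (-θ - 1))|
      ≤ (2 + θ) * p ^ 2 * t ^ (1 - θ) := by
  have hu : 0 < t ^ (-θ) := rpow_pos_of_pos ht _
  have hsin2 : |sin (2 * (p * t))| ≤ 2 * |p| * t := by
    simpa [abs_mul, abs_of_pos ht, mul_assoc] using abs_sin_le_abs (x := 2 * (p * t))
  have hsin : sin (p * t) ^ 2 ≤ p ^ 2 * t ^ 2 := by simpa [mul_pow] using sin_sq_le_sq (x := p * t)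
  have h1 : |p * sin (2 * (p * t)) * t ^ (-θ)| ≤ 2 * p ^ 2 * (t * t ^ (-θ)) := by
    rw [abs_mul, abs_mul, abs_of_pos hu, ← sq_abs p]
    have := mul_le_mul_of_nonneg_left hsin2 (abs_nonneg p)
    nlinarith
  have h2 : |sin (p * t) ^ 2 * (-θ * t ^ (-θ - 1))| ≤ θ * p ^ 2 * (t * t ^ (-θ)) := by
    rw [rpow_sub_one ht.ne', abs_mul, abs_of_nonneg (sq_nonneg _), abs_mul, abs_neg,
      abs_of_nonneg hθ, abs_of_pos (div_pos hu ht)]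
    calc sin (p * t) ^ 2 * (θ * (t ^ (-θ) / t)) ≤ p ^ 2 * t ^ 2 * (θ * (t ^ (-θ) / t)) := by
          gcongr
      _ = θ * p ^ 2 * (t * t ^ (-θ)) := by field_simp
  have h3 : t * t ^ (-θ) = t ^ (1 - θ) := by rw [sub_eq_add_neg, rpow_add ht, rpow_one]
  calc _ ≤ _ := abs_add_le _ _
    _ ≤ _ := add_le_add h1 h2
    _ = (2 + θ) * p ^ 2 * t ^ (1 - θ) := by rw [h3]; ring

lemma continuousOn_sinSqDivRpow (θ p : ℝ) : ContinuousOn (sinSqDivRpow θ p) (Ioi 0) :=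
  fun _ ht => (hasDerivAt_sinSqDivRpow θ p ht).continuousAt.continuousWithinAt

lemma integrableOn_Ioc_sinSqDivRpow {θ : ℝ} (hθ : θ < 3) (p : ℝ) :
    IntegrableOn (sinSqDivRpow θ p) (Ioc 0 1) := by
  refine Integrable.mono' (((intervalIntegral.intervalIntegrable_rpow' (a := 0) (b := 1)
    (by linarith : -1 < 2 - θ)).1).const_mul (p ^ 2))
    (((continuousOn_sinSqDivRpow θ p).mono Ioc_subset_Ioi_self).aestronglyMeasurable
      measurableSet_Ioc) ?_
  filter_upwards [ae_restrict_mem measurableSet_Ioc] with t ht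
  rw [Real.norm_eq_abs, abs_of_nonneg (sinSqDivRpow_nonneg θ p ht.1.le)]
  exact sinSqDivRpow_le_sq_mul_rpow θ p ht.1

lemma integrableOn_Ioi_one_sinSqDivRpow {θ : ℝ} (hθ : 1 < θ) (p : ℝ) :
    IntegrableOn (sinSqDivRpow θ p) (Ioi 1) := by
  refine Integrable.mono' (integrableOn_Ioi_rpow_of_lt (by linarith : -θ < -1) one_pos)
    (((continuousOn_sinSqDivRpow θ p).mono (Ioi_subset_Ioi zero_le_one)).aestronglyMeasurable
      measurableSet_Ioi) ?_
  filter_upwards [ae_restrict_mem measurableSet_Ioi] with t (ht : 1 < t)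
  rw [Real.norm_eq_abs, abs_of_nonneg (sinSqDivRpow_nonneg θ p (by linarith))]
  exact sinSqDivRpow_le_rpow_neg θ p (by linarith)

lemma abs_integral_Ioc_sinSqDivRpow_le {θ : ℝ} (hθ : θ < 3) (p : ℝ) :
    |∫ t in Ioc 0 1, sinSqDivRpow θ p t| ≤ p ^ 2 / (3 - θ) := by
  rw [abs_of_nonneg (setIntegral_nonneg measurableSet_Ioc fun t ht =>
    sinSqDivRpow_nonneg θ p ht.1.le), ← intervalIntegral.integral_of_le zero_le_one]
  calc ∫ t in (0 : ℝ)..1, sinSqDivRpow θ p t ≤ ∫ t in (0 : ℝ)..1, p ^ 2 * t ^ (2 - θ) :=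
        intervalIntegral.integral_mono_on_of_le_Ioo zero_le_one
          ((intervalIntegrable_iff_integrableOn_Ioc_of_le zero_le_one).2
            (integrableOn_Ioc_sinSqDivRpow hθ p))
          ((intervalIntegral.intervalIntegrable_rpow' (by linarith)).const_mul _)
          fun t ht => sinSqDivRpow_le_sq_mul_rpow θ p ht.1
    _ = p ^ 2 / (3 - θ) := by
        rw [intervalIntegral.integral_const_mul, integral_rpow (Or.inl (by linarith)),
          zero_rpow (by linarith), one_rpow, show 2 - θ + 1 = 3 - θ by ring]
        ring

lemma integral_sinSqDivRpow (θ : ℝ) {p : ℝ} (hp : 0 < p) :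
    ∫ t in Ioi 0, sinSqDivRpow θ p t = p ^ (θ - 1) * ∫ y in Ioi 0, sin y ^ 2 / y ^ θ := by
  have hscale : EqOn (sinSqDivRpow θ p) (fun t => p ^ θ * (sin (p * t) ^ 2 / (p * t) ^ θ))
      (Ioi 0) := fun t (ht : 0 < t) => by
    dsimp only [sinSqDivRpow]
    rw [mul_rpow hp.le ht.le, ← mul_div_assoc, mul_div_mul_left _ _ (rpow_pos_of_pos hp θ).ne']
  rw [setIntegral_congr_fun measurableSet_Ioi hscale, integral_const_mul,
    integral_comp_mul_left_Ioi (fun y => sin y ^ 2 / y ^ θ) 0 hp, mul_zero, smul_eq_mul,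
    rpow_sub_one hp.ne']
  field_simp

lemma abs_tsum_sub_integral_Ioi_one_sinSqDivRpow_le {θ : ℝ} (hθ : 2 < θ) (p : ℝ) :
    |∑' n : ℕ, sinSqDivRpow θ p (1 + n) - ∫ t in Ioi 1, sinSqDivRpow θ p t|
      ≤ (2 + θ) * p ^ 2 * ∑' n : ℕ, (1 + n : ℝ) ^ (1 - θ) := by
  have hsum : Summable fun n : ℕ => (1 + n : ℝ) ^ (1 - θ) := by
    simpa [add_comm] using
      (summable_nat_add_iff 1).2 (summable_nat_rpow.2 (by linarith : 1 - θ < -1))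
  rw [← tsum_mul_left]
  refine abs_tsum_sub_integral_Ioi_le (fun t ht => hasDerivAt_sinSqDivRpow θ p (by linarith))
    (fun n t ht => ?_) (hsum.mul_left _) (integrableOn_Ioi_one_sinSqDivRpow (by linarith) p)
  have hn : (0 : ℝ) < 1 + n := by positivity
  exact (abs_deriv_sinSqDivRpow_le (by linarith) p (hn.trans_le ht.1)).trans
    (mul_le_mul_of_nonneg_left (rpow_le_rpow_of_nonpos hn ht.1 (by linarith)) (by positivity))

theorem stmt6 (θ : ℝ) (hθ1 : 2 < θ) (hθ2 : θ < 3) :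
    ∃ K > 0, ∀ k ∈ Set.Ioc (0 : ℝ) (1 / 2),
      |ahat θ k - Cθ θ * k ^ (θ - 1)| ≤ K * k ^ 2 := by
  set T := ∑' n : ℕ, (1 + n : ℝ) ^ (1 - θ)
  have hT : 0 ≤ T := tsum_nonneg fun n => by positivity
  refine ⟨4 * ((2 + θ) * π ^ 2 * T + π ^ 2 / (3 - θ)), by positivity, fun k hk => ?_⟩
  set p := π * k
  have hahat : ahat θ k = 4 * ∑' n : ℕ, sinSqDivRpow θ p (1 + n) := by
    simp_rw [add_comm (1 : ℝ)]
    rfl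
  have hC : Cθ θ * k ^ (θ - 1)
      = 4 * ((∫ t in Ioc 0 1, sinSqDivRpow θ p t) + ∫ t in Ioi 1, sinSqDivRpow θ p t) := by
    rw [← setIntegral_union Ioc_disjoint_Ioi_same measurableSet_Ioi
      (integrableOn_Ioc_sinSqDivRpow hθ2 p) (integrableOn_Ioi_one_sinSqDivRpow (by linarith) p),
      Ioc_union_Ioi_eq_Ioi zero_le_one, integral_sinSqDivRpow θ (mul_pos pi_pos hk.1), Cθ,
      mul_rpow pi_pos.le hk.1.le]
    ring
  calc |ahat θ k - Cθ θ * k ^ (θ - 1)|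
      = 4 * |(∑' n : ℕ, sinSqDivRpow θ p (1 + n) - ∫ t in Ioi 1, sinSqDivRpow θ p t)
          - ∫ t in Ioc 0 1, sinSqDivRpow θ p t| := by
        rw [hahat, hC, ← mul_sub, abs_mul, abs_of_pos four_pos]
        congr 2
        ring
    _ ≤ 4 * ((2 + θ) * p ^ 2 * T + p ^ 2 / (3 - θ)) := by
        gcongr
        exact (abs_sub _ _).trans <| add_le_add
          (abs_tsum_sub_integral_Ioi_one_sinSqDivRpow_le hθ1 p)
          (abs_integral_Ioc_sinSqDivRpow_le hθ2 p)
    _ = 4 * ((2 + θ) * π ^ 2 * T + π ^ 2 / (3 - θ)) * k ^ 2 := by ring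
end
end

section
/- Let θ = 3. There exists a constant K > 0 such that for all k ∈ (0, 1/2] one has |α̂(k) − 4π²·k²·log(1/k)| ≤ K·k². -/
/-!
With `u = π k`, `α̂(k) = 4 ∑_{m ≥ 1} sin² (u m) / m³`; split the sum at `N = ⌊1 / u⌋`.
For `m ≤ N` we have `u m ≤ 1` and `sin² (u m) = u² m² + O(u⁴ m⁴)`, so the head is
`u² H_N + O(u⁴ N²) = u² log (1 / u) + O(u²)`, since the harmonic number `H_N` is
`log (1 / u) + O(1)`. For `m > N`, `sin² (u m) ≤ u m` and
`∑_{m > N} 1 / m² ≤ 2 / (N + 1) ≤ 2 u`, so the tail is `O(u²)`.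
Finally `log (1 / k) = log (1 / u) + log π` only shifts the error by `u² log π`.
-/

noncomputable section
open Real

open Finset

lemma abs_sin_sq_sub_sq_le {t : ℝ} (h0 : 0 ≤ t) (h1 : t ≤ 1) :
    |sin t ^ 2 - t ^ 2| ≤ t ^ 4 / 2 := by
  have hsin : t - t ^ 3 / 6 ≤ sin t := by
    rcases h0.eq_or_lt with rfl | ht
    · simp
    · exact (sin_gt_sub_cube ht).le
  have hsin0 : 0 ≤ sin t := sin_nonneg_of_nonneg_of_le_pi h0 (by linarith [pi_gt_three])
  have hdiff : t - sin t ≤ t ^ 3 / 6 := by linarith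
  have hsum : t + sin t ≤ 2 * t := by linarith [sin_le h0]
  rw [abs_sub_comm, abs_of_nonneg (sub_nonneg.2 sin_sq_le_sq)]
  nlinarith [mul_le_mul hdiff hsum (by linarith) (by positivity)]

lemma sin_sq_le_self {t : ℝ} (h0 : 0 ≤ t) : sin t ^ 2 ≤ t :=
  calc sin t ^ 2 = |sin t| * |sin t| := by rw [abs_mul_abs_self, sq]
    _ ≤ 1 * t := mul_le_mul (abs_sin_le_one t) (abs_sin_le_abs.trans_eq (abs_of_nonneg h0))
        (abs_nonneg _) zero_le_one
    _ = t := one_mul t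

def sinSqDivCube (u : ℝ) (n : ℕ) : ℝ := sin (u * (n + 1)) ^ 2 / ((n : ℝ) + 1) ^ 3

lemma sinSqDivCube_nonneg (u : ℝ) (n : ℕ) : 0 ≤ sinSqDivCube u n := by
  unfold sinSqDivCube; positivity

lemma summable_sinSqDivCube (u : ℝ) : Summable (sinSqDivCube u) := by
  have hcube : Summable fun n : ℕ => 1 / ((n : ℝ) + 1) ^ 3 := by
    have := (summable_nat_add_iff 1).2 ((summable_one_div_nat_pow (p := 3)).2 (by norm_num))
    exact_mod_cast this
  refine hcube.of_nonneg_of_le (sinSqDivCube_nonneg u) fun n => ?_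
  unfold sinSqDivCube
  gcongr
  exact sin_sq_le_one _

lemma ahat_three (k : ℝ) : ahat 3 k = 4 * ∑' n, sinSqDivCube (π * k) n := by
  unfold ahat sinSqDivCube
  congr 1
  exact tsum_congr fun n => by rw [rpow_ofNat]

lemma abs_sum_sinSqDivCube_sub_harmonic_le {u : ℝ} (hu : 0 ≤ u) {N : ℕ} (hN : u * N ≤ 1) :
    |∑ n ∈ range N, sinSqDivCube u n - u ^ 2 * harmonic N| ≤ u ^ 2 / 2 := by
  have hterm : ∀ n ∈ range N,
      |sinSqDivCube u n - u ^ 2 * (n + 1 : ℝ)⁻¹| ≤ u ^ 4 * N / 2 := by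
    intro n hn
    have hnN : (n : ℝ) + 1 ≤ N := by exact_mod_cast mem_range.1 hn
    have hm : (0 : ℝ) < n + 1 := by positivity
    have hsq := abs_sin_sq_sub_sq_le (t := u * (n + 1)) (by positivity)
      ((mul_le_mul_of_nonneg_left hnN hu).trans hN)
    have heq : sinSqDivCube u n - u ^ 2 * (n + 1 : ℝ)⁻¹
        = (sin (u * (n + 1)) ^ 2 - (u * (n + 1)) ^ 2) / ((n : ℝ) + 1) ^ 3 := by
      unfold sinSqDivCube; field_simp
    rw [heq, abs_div, abs_of_pos (pow_pos hm 3), div_le_iff₀ (pow_pos hm 3)]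
    calc _ ≤ (u * (n + 1)) ^ 4 / 2 := hsq
      _ = u ^ 4 * (n + 1) / 2 * (n + 1) ^ 3 := by ring
      _ ≤ u ^ 4 * N / 2 * (n + 1) ^ 3 := by gcongr
  have hharm : ((harmonic N : ℚ) : ℝ) = ∑ n ∈ range N, (n + 1 : ℝ)⁻¹ := by
    simp [harmonic]
  rw [hharm, mul_sum, ← sum_sub_distrib]
  calc _ ≤ ∑ n ∈ range N, |sinSqDivCube u n - u ^ 2 * (n + 1 : ℝ)⁻¹| :=
        abs_sum_le_sum_abs _ _
    _ ≤ ∑ n ∈ range N, u ^ 4 * N / 2 := sum_le_sum hterm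
    _ = u ^ 2 * (u * N) ^ 2 / 2 := by simp; ring
    _ ≤ u ^ 2 / 2 := by
      have : (u * N) ^ 2 ≤ 1 := pow_le_one₀ (by positivity) hN
      nlinarith [sq_nonneg u]

lemma tsum_sinSqDivCube_add_le {u : ℝ} (hu : 0 ≤ u) {N : ℕ} (hN : 1 ≤ u * (N + 1)) :
    ∑' n, sinSqDivCube u (n + N) ≤ 2 * u ^ 2 := by
  set g : ℕ → ℝ := fun n => 2 * u / ((N : ℝ) + 1 + n)
  have hstep : ∀ n, sinSqDivCube u (n + N) ≤ g n - g (n + 1) := by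
    intro n
    set m : ℝ := N + 1 + n
    have hm : 1 ≤ m := by
      simp only [m]; linarith [N.cast_nonneg (α := ℝ), n.cast_nonneg (α := ℝ)]
    have hcast : ((n + N : ℕ) : ℝ) + 1 = m := by push_cast; ring
    have hg : g n - g (n + 1) = 2 * u / m - 2 * u / (m + 1) := by
      simp only [g, m]; push_cast; ring_nf
    rw [hg, sinSqDivCube, hcast]
    calc sin (u * m) ^ 2 / m ^ 3 ≤ u * m / m ^ 3 := by
          gcongr; exact sin_sq_le_self (by positivity)
      _ ≤ 2 * u / m - 2 * u / (m + 1) := by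
          rw [div_sub_div _ _ (by positivity) (by positivity), div_le_div_iff₀ (by positivity)
            (by positivity)]
          nlinarith [mul_nonneg hu (by positivity : (0 : ℝ) ≤ m ^ 3)]
  have hsum : ∀ n, ∑ i ∈ range n, sinSqDivCube u (i + N) ≤ g 0 :=
    fun n => calc
      _ ≤ ∑ i ∈ range n, (g i - g (i + 1)) := sum_le_sum fun i _ => hstep i
      _ = g 0 - g n := sum_range_sub' g n
      _ ≤ g 0 := sub_le_self _ (by positivity)
  calc _ ≤ g 0 := tsum_le_of_sum_range_le (fun n => sinSqDivCube_nonneg u _) hsum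
    _ = 2 * u / (N + 1) := by simp [g]
    _ ≤ 2 * u ^ 2 := by
      rw [div_le_iff₀ (by positivity)]; nlinarith

lemma abs_harmonic_floor_inv_sub_log_le {u : ℝ} (hu : 0 < u) (hu2 : u ≤ 2) :
    |(harmonic ⌊u⁻¹⌋₊ : ℝ) - log u⁻¹| ≤ 1 := by
  have hlow := log_le_harmonic_floor u⁻¹ (inv_nonneg.2 hu.le)
  rw [abs_of_nonneg (sub_nonneg.2 hlow)]
  rcases le_or_gt 1 u⁻¹ with h1 | h1
  · linarith [harmonic_floor_le_one_add_log u⁻¹ h1]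
  · rw [Nat.floor_eq_zero.2 h1, log_inv]
    simp only [harmonic_zero, Rat.cast_zero, zero_sub, neg_neg]
    linarith [log_le_sub_one_of_pos hu]

theorem abs_tsum_sinSqDivCube_sub_le {u : ℝ} (hu : 0 < u) (hu2 : u ≤ 2) :
    |∑' n, sinSqDivCube u n - u ^ 2 * log u⁻¹| ≤ 4 * u ^ 2 := by
  set N := ⌊u⁻¹⌋₊
  have hhead : u * N ≤ 1 := by
    calc u * N ≤ u * u⁻¹ := by gcongr; exact Nat.floor_le (inv_nonneg.2 hu.le)
      _ = 1 := mul_inv_cancel₀ hu.ne'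
  have htail : 1 ≤ u * (N + 1) := by
    calc 1 = u * u⁻¹ := (mul_inv_cancel₀ hu.ne').symm
      _ ≤ u * (N + 1) := by gcongr; exact (Nat.lt_floor_add_one u⁻¹).le
  have hsplit := (summable_sinSqDivCube u).sum_add_tsum_nat_add N
  have hlog := abs_harmonic_floor_inv_sub_log_le hu hu2
  rw [← hsplit]
  calc _ = |(∑ n ∈ range N, sinSqDivCube u n - u ^ 2 * harmonic N)
          + u ^ 2 * ((harmonic N : ℝ) - log u⁻¹) + ∑' n, sinSqDivCube u (n + N)| := by
        congr 1; ring
    _ ≤ u ^ 2 / 2 + u ^ 2 * 1 + 2 * u ^ 2 := by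
      refine (abs_add_le _ _).trans (add_le_add ((abs_add_le _ _).trans (add_le_add
        (abs_sum_sinSqDivCube_sub_harmonic_le hu.le hhead) ?_)) ?_)
      · rw [abs_mul, abs_of_nonneg (by positivity)]; gcongr
      · rw [abs_of_nonneg (tsum_nonneg fun n => sinSqDivCube_nonneg u _)]
        exact tsum_sinSqDivCube_add_le hu.le htail
    _ ≤ 4 * u ^ 2 := by nlinarith [sq_nonneg u]

theorem stmt7 :
    ∃ K > 0, ∀ k ∈ Set.Ioc (0 : ℝ) (1 / 2),
      |ahat 3 k - 4 * π ^ 2 * k ^ 2 * Real.log (1 / k)| ≤ K * k ^ 2 := by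
  have hlogπ : 0 ≤ log π := log_nonneg (by linarith [pi_gt_three])
  refine ⟨4 * π ^ 2 * (4 + log π), mul_pos (by positivity) (by linarith), ?_⟩
  rintro k ⟨hk0, hk2⟩
  have hu : 0 < π * k := by positivity
  have hu2 : π * k ≤ 2 := by nlinarith [pi_lt_four]
  have hlog : log (1 / k) = log (π * k)⁻¹ + log π := by
    rw [one_div, log_inv, log_inv, log_mul pi_ne_zero hk0.ne']; ring
  have key := abs_tsum_sinSqDivCube_sub_le hu hu2
  rw [ahat_three, hlog]
  calc _ = |4 * (∑' n, sinSqDivCube (π * k) n - (π * k) ^ 2 * log (π * k)⁻¹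
          - (π * k) ^ 2 * log π)| := by congr 1; ring
    _ = 4 * |∑' n, sinSqDivCube (π * k) n - (π * k) ^ 2 * log (π * k)⁻¹
          - (π * k) ^ 2 * log π| := by rw [abs_mul, abs_of_pos four_pos]
    _ ≤ 4 * (4 * (π * k) ^ 2 + (π * k) ^ 2 * log π) := by
      gcongr
      refine (abs_sub _ _).trans (add_le_add key ?_)
      rw [abs_of_nonneg (by positivity)]
    _ = 4 * π ^ 2 * (4 + log π) * k ^ 2 := by ring
end
end

section
/- Let θ ∈ (2,3) ∪ (3,∞). There exists a constant C > 0 such that for all k, k' ∈ [−1/2, 1/2) one has |α̂(k+k') − α̂(k) − α̂(k')| ≤ C·ω(k)·ω(k'), where ω(k) := √(α̂(k)) and α̂ is understood as a 1-periodic function on ℝ. -/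
noncomputable section
open Real

/-- The dispersion relation `ω(k) = √(α̂(k))`. -/
def disp (θ k : ℝ) : ℝ := Real.sqrt (ahat θ k)

/-! Termwise, `sin² (a + b) - sin² a - sin² b = 2 sin a sin b cos (a + b)`, so the defect of the
weighted sum `∑ w sin²` is bounded by `2 ∑ √(w sin² a) √(w sin² b)`, and Cauchy–Schwarz turns
this into `2 √(∑ w sin² a) √(∑ w sin² b)`. With `w x = (x + 1)^(-θ)`, summable for `θ > 1`, this
gives the claim with `C = 2` for all `k, k'`. -/

namespace Real

theorem sin_sq_add_sub_sin_sq_sub_sin_sq (a b : ℝ) :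
    sin (a + b) ^ 2 - sin a ^ 2 - sin b ^ 2 = 2 * sin a * sin b * cos (a + b) := by
  rw [sin_add, cos_add]
  linear_combination sin a ^ 2 * sin_sq_add_cos_sq b + sin b ^ 2 * sin_sq_add_cos_sq a

theorem abs_sin_sq_add_sub_sin_sq_sub_sin_sq_le (a b : ℝ) :
    |sin (a + b) ^ 2 - sin a ^ 2 - sin b ^ 2| ≤ 2 * |sin a| * |sin b| := by
  rw [sin_sq_add_sub_sin_sq_sub_sin_sq, abs_mul, abs_mul, abs_mul, abs_two]
  exact mul_le_of_le_one_right (by positivity) (abs_cos_le_one _)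

theorem summable_sqrt_mul_sqrt {ι : Type*} {f g : ι → ℝ} (hf : ∀ i, 0 ≤ f i)
    (hg : ∀ i, 0 ≤ g i) (hfs : Summable f) (hgs : Summable g) :
    Summable fun i => √(f i) * √(g i) := by
  refine ((hfs.add hgs).div_const 2).of_nonneg_of_le (fun i => by positivity) fun i => ?_
  have := two_mul_le_add_sq √(f i) √(g i)
  rw [sq_sqrt (hf i), sq_sqrt (hg i)] at this
  linarith

theorem tsum_sqrt_mul_sqrt_le {ι : Type*} {f g : ι → ℝ} (hf : ∀ i, 0 ≤ f i) (hg : ∀ i, 0 ≤ g i)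
    (hfs : Summable f) (hgs : Summable g) :
    ∑' i, √(f i) * √(g i) ≤ √(∑' i, f i) * √(∑' i, g i) := by
  refine (summable_sqrt_mul_sqrt hf hg hfs hgs).tsum_le_of_sum_le fun s =>
    (sum_sqrt_mul_sqrt_le s hf hg).trans ?_
  gcongr
  exacts [hfs.sum_le_tsum s fun i _ => hf i, hgs.sum_le_tsum s fun i _ => hg i]

end Real

theorem abs_tsum_mul_sin_sq_add_sub_le {ι : Type*} {w : ι → ℝ} (hw : ∀ i, 0 ≤ w i)
    (hws : Summable w) (a b : ι → ℝ) :
    |∑' i, w i * sin (a i + b i) ^ 2 - ∑' i, w i * sin (a i) ^ 2 - ∑' i, w i * sin (b i) ^ 2|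
      ≤ 2 * √(∑' i, w i * sin (a i) ^ 2) * √(∑' i, w i * sin (b i) ^ 2) := by
  have hsum (c : ι → ℝ) : Summable fun i => w i * sin (c i) ^ 2 :=
    hws.of_nonneg_of_le (fun i => mul_nonneg (hw i) (sq_nonneg _))
      fun i => mul_le_of_le_one_right (hw i) (sin_sq_le_one _)
  have hpt (i : ι) : ‖w i * sin (a i + b i) ^ 2 - w i * sin (a i) ^ 2 - w i * sin (b i) ^ 2‖
      ≤ 2 * (√(w i * sin (a i) ^ 2) * √(w i * sin (b i) ^ 2)) := by
    have hwi := hw i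
    rw [Real.norm_eq_abs, ← mul_sub, ← mul_sub, abs_mul, abs_of_nonneg hwi, sqrt_mul hwi,
      sqrt_mul hwi, sqrt_sq_eq_abs, sqrt_sq_eq_abs]
    have hdef := abs_sin_sq_add_sub_sin_sq_sub_sin_sq_le (a i) (b i)
    calc w i * |sin (a i + b i) ^ 2 - sin (a i) ^ 2 - sin (b i) ^ 2|
        ≤ w i * (2 * |sin (a i)| * |sin (b i)|) := by gcongr
      _ = 2 * (√(w i) * |sin (a i)| * (√(w i) * |sin (b i)|)) := by
        linear_combination -(2 * |sin (a i)| * |sin (b i)|) * mul_self_sqrt hwi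
  have hwa (i : ι) : 0 ≤ w i * sin (a i) ^ 2 := mul_nonneg (hw i) (sq_nonneg _)
  have hwb (i : ι) : 0 ≤ w i * sin (b i) ^ 2 := mul_nonneg (hw i) (sq_nonneg _)
  rw [← (hsum _).tsum_sub (hsum a), ← ((hsum _).sub (hsum a)).tsum_sub (hsum b),
    ← Real.norm_eq_abs]
  calc _ ≤ ∑' i, 2 * (√(w i * sin (a i) ^ 2) * √(w i * sin (b i) ^ 2)) :=
        tsum_of_norm_bounded
          ((summable_sqrt_mul_sqrt hwa hwb (hsum a) (hsum b)).mul_left 2).hasSum hpt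
    _ ≤ _ := by
      rw [tsum_mul_left, mul_assoc]
      gcongr
      exact tsum_sqrt_mul_sqrt_le hwa hwb (hsum a) (hsum b)

theorem summable_inv_nat_add_one_rpow {θ : ℝ} (hθ : 1 < θ) :
    Summable fun x : ℕ => (((x : ℝ) + 1) ^ θ)⁻¹ := by
  simpa using (summable_nat_add_iff 1).2 (summable_nat_rpow_inv.2 hθ)

theorem ahat_eq_tsum (θ k : ℝ) :
    ahat θ k = 4 * ∑' x : ℕ, (((x : ℝ) + 1) ^ θ)⁻¹ * sin (π * k * ((x : ℝ) + 1)) ^ 2 := by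
  simp only [ahat, div_eq_inv_mul]

theorem disp_eq_two_mul_sqrt_tsum (θ k : ℝ) :
    disp θ k = 2 * √(∑' x : ℕ, (((x : ℝ) + 1) ^ θ)⁻¹ * sin (π * k * ((x : ℝ) + 1)) ^ 2) := by
  rw [disp, ahat_eq_tsum, sqrt_mul zero_le_four, show (4 : ℝ) = 2 ^ 2 by norm_num,
    sqrt_sq zero_le_two]

theorem abs_ahat_add_sub_le {θ : ℝ} (hθ : 1 < θ) (k k' : ℝ) :
    |ahat θ (k + k') - ahat θ k - ahat θ k'| ≤ 2 * disp θ k * disp θ k' := by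
  have key := abs_tsum_mul_sin_sq_add_sub_le (fun x : ℕ => by positivity)
    (summable_inv_nat_add_one_rpow hθ) (fun x => π * k * ((x : ℝ) + 1))
    (fun x => π * k' * ((x : ℝ) + 1))
  simp only [← add_mul, ← mul_add] at key
  rw [ahat_eq_tsum, ahat_eq_tsum, ahat_eq_tsum, disp_eq_two_mul_sqrt_tsum,
    disp_eq_two_mul_sqrt_tsum, ← mul_sub, ← mul_sub, abs_mul, abs_of_pos four_pos]
  linarith

theorem stmt11 (θ : ℝ) (hθ : (2 < θ ∧ θ < 3) ∨ 3 < θ) :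
    ∃ C > 0, ∀ k ∈ Set.Ico (-(1 : ℝ) / 2) (1 / 2), ∀ k' ∈ Set.Ico (-(1 : ℝ) / 2) (1 / 2),
      |ahat θ (k + k') - ahat θ k - ahat θ k'| ≤ C * disp θ k * disp θ k' := by
  have hθ1 : 1 < θ := by rcases hθ with ⟨h, _⟩ | h <;> linarith
  exact ⟨2, two_pos, fun k _ k' _ => abs_ahat_add_sub_le hθ1 k k'⟩
end
end

section
/- For every real a with 1 < a < 2, the improper integral ∫₀^∞ sin(y)·y^{−a} dy converges (the integrand is absolutely integrable near 0 and the integral converges conditionally at ∞), and ∫₀^∞ sin(y)·y^{−a} dy = cos(aπ/2)·Γ(1 − a), where Γ is the Gamma function. -/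
/-!
Multiply by `Γ(a) = y ^ a ∫₀^∞ x^(a-1) e^(-yx) dx` and swap the integrals (the double integral
converges absolutely because `1 < a < 2`): the Laplace transform of `sin` turns `Γ(a) · I` into
`∫₀^∞ x^(a-1) / (x² + 1) dx`. Writing `1 / (x² + 1) = ∫₀^∞ e^(-(x²+1)t) dt` and swapping once more
gives `Γ(a/2) Γ(1 - a/2) / 2`, and the reflection formula `Γ(s) Γ(1 - s) = π / sin(π s)` at
`s = a` and `s = a/2` identifies this with `Γ(a) cos(aπ/2) Γ(1 - a)`.
-/

open Real MeasureTheory Set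

lemma integrableOn_sin_mul_rpow_neg {a : ℝ} (ha1 : 1 < a) (ha2 : a < 2) :
    IntegrableOn (fun y : ℝ => sin y * y ^ (-a)) (Ioi 0) := by
  have hm : AEStronglyMeasurable (fun y : ℝ => sin y * y ^ (-a)) := by fun_prop
  rw [← Ioc_union_Ioi_eq_Ioi zero_le_one]
  refine IntegrableOn.union ?_ ?_
  · have hdom : IntegrableOn (fun y : ℝ => y ^ (1 - a)) (Ioc 0 1) := by
      rw [← intervalIntegrable_iff_integrableOn_Ioc_of_le zero_le_one]
      exact intervalIntegral.intervalIntegrable_rpow' (show -1 < 1 - a by linarith)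
    refine hdom.mono' hm.restrict ?_
    filter_upwards [ae_restrict_mem measurableSet_Ioc] with y ⟨hy, _⟩
    calc ‖sin y * y ^ (-a)‖ = |sin y| * y ^ (-a) := by
          rw [norm_mul, norm_of_nonneg (rpow_nonneg hy.le _), norm_eq_abs]
      _ ≤ y * y ^ (-a) := by
          gcongr
          exact (abs_sin_le_abs).trans_eq (abs_of_pos hy)
      _ = y ^ (1 - a) := by rw [sub_eq_add_neg, rpow_add hy, rpow_one]
  · refine (integrableOn_Ioi_rpow_of_lt (show -a < -1 by linarith) one_pos).mono' hm.restrict ?_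
    filter_upwards [ae_restrict_mem measurableSet_Ioi] with y (hy : 1 < y)
    calc ‖sin y * y ^ (-a)‖ = |sin y| * y ^ (-a) := by
          rw [norm_mul, norm_of_nonneg (rpow_nonneg (by linarith) _), norm_eq_abs]
      _ ≤ y ^ (-a) := mul_le_of_le_one_left (rpow_nonneg (by linarith) _) (abs_sin_le_one _)

lemma integral_exp_neg_mul_mul_sin {x : ℝ} (hx : 0 < x) :
    ∫ y in Ioi (0 : ℝ), exp (-(x * y)) * sin y = 1 / (x ^ 2 + 1) := by
  have hre : (-x + Complex.I).re < 0 := by simpa using hx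
  have h := integral_im (integrableOn_exp_mul_complex_Ioi hre 0)
  rw [integral_exp_mul_complex_Ioi hre 0] at h
  convert h using 1
  · refine setIntegral_congr_fun measurableSet_Ioi fun y _ => ?_
    simp [Complex.exp_im]
  · have hnormSq : Complex.normSq (-x + Complex.I) = x ^ 2 + 1 := by
      simp only [Complex.normSq_apply, Complex.add_re, Complex.neg_re, Complex.ofReal_re,
        Complex.I_re, Complex.add_im, Complex.neg_im, Complex.ofReal_im, Complex.I_im]
      ring
    simp [hnormSq, neg_div]

lemma integral_rpow_mul_exp_neg_mul {a y : ℝ} (ha : 0 < a) (hy : 0 < y) :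
    ∫ x in Ioi (0 : ℝ), x ^ (a - 1) * exp (-(y * x)) = y ^ (-a) * Gamma a := by
  rw [integral_rpow_mul_exp_neg_mul_Ioi ha hy, one_div, inv_rpow hy.le, rpow_neg hy.le]

lemma integrableOn_rpow_mul_exp_neg_mul {a y : ℝ} (ha : 0 < a) (hy : 0 < y) :
    IntegrableOn (fun x : ℝ => x ^ (a - 1) * exp (-(y * x))) (Ioi 0) := by
  simpa using integrableOn_rpow_mul_exp_neg_mul_rpow (show -1 < a - 1 by linarith) one_pos hy

lemma Gamma_mul_integral_sin_mul_rpow_neg {a : ℝ} (ha1 : 1 < a) (ha2 : a < 2) :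
    Gamma a * ∫ y in Ioi (0 : ℝ), sin y * y ^ (-a)
      = ∫ x in Ioi (0 : ℝ), x ^ (a - 1) / (x ^ 2 + 1) := by
  have ha : 0 < a := by linarith
  set f : ℝ → ℝ → ℝ := fun y x => x ^ (a - 1) * exp (-(y * x)) * sin y
  have hsection : ∀ y > 0, IntegrableOn (f y) (Ioi 0) := fun y hy =>
    ((integrableOn_rpow_mul_exp_neg_mul ha hy).mul_const (sin y) :)
  have hnorm : ∀ y > 0, ∫ x in Ioi (0 : ℝ), ‖f y x‖ = Gamma a * ‖sin y * y ^ (-a)‖ := by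
    intro y hy
    calc ∫ x in Ioi (0 : ℝ), ‖f y x‖
        = ∫ x in Ioi (0 : ℝ), x ^ (a - 1) * exp (-(y * x)) * |sin y| := by
          refine setIntegral_congr_fun measurableSet_Ioi fun x (hx : 0 < x) => ?_
          rw [norm_mul, norm_mul, norm_of_nonneg (rpow_nonneg hx.le _),
            norm_of_nonneg (exp_pos _).le, norm_eq_abs]
      _ = Gamma a * ‖sin y * y ^ (-a)‖ := by
          rw [integral_mul_const, integral_rpow_mul_exp_neg_mul ha hy, norm_mul,
            norm_of_nonneg (rpow_nonneg hy.le _), norm_eq_abs]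
          ring
  have hintegrable : Integrable (Function.uncurry f)
      ((volume.restrict (Ioi 0)).prod (volume.restrict (Ioi 0))) := by
    refine (integrable_prod_iff (by fun_prop)).2 ⟨?_, ?_⟩
    · filter_upwards [ae_restrict_mem measurableSet_Ioi] with y hy using hsection y hy
    · refine ((integrableOn_sin_mul_rpow_neg ha1 ha2).norm.const_mul (Gamma a)).congr ?_
      filter_upwards [ae_restrict_mem measurableSet_Ioi] with y hy using (hnorm y hy).symm
  calc Gamma a * ∫ y in Ioi (0 : ℝ), sin y * y ^ (-a)
      = ∫ y in Ioi (0 : ℝ), ∫ x in Ioi (0 : ℝ), f y x := by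
        rw [← integral_const_mul]
        refine setIntegral_congr_fun measurableSet_Ioi fun y (hy : 0 < y) => ?_
        rw [integral_mul_const, integral_rpow_mul_exp_neg_mul ha hy]
        ring
    _ = ∫ x in Ioi (0 : ℝ), ∫ y in Ioi (0 : ℝ), f y x := integral_integral_swap hintegrable
    _ = ∫ x in Ioi (0 : ℝ), x ^ (a - 1) / (x ^ 2 + 1) := by
        refine setIntegral_congr_fun measurableSet_Ioi fun x (hx : 0 < x) => ?_
        simp_rw [f, mul_assoc, integral_const_mul, mul_comm _ x]
        rw [integral_exp_neg_mul_mul_sin hx, mul_one_div]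

lemma integral_rpow_mul_exp_neg_mul_sq {a t : ℝ} (ha : 0 < a) (ht : 0 < t) :
    ∫ x in Ioi (0 : ℝ), x ^ (a - 1) * exp (-t * x ^ 2) = t ^ (-(a / 2)) * Gamma (a / 2) / 2 := by
  have h := integral_rpow_mul_exp_neg_mul_rpow two_pos (show -1 < a - 1 by linarith) ht
  simp only [rpow_two, sub_add_cancel, neg_div] at h
  rw [h]
  ring

lemma integral_rpow_div_sq_add_one {a : ℝ} (ha0 : 0 < a) (ha2 : a < 2) :
    ∫ x in Ioi (0 : ℝ), x ^ (a - 1) / (x ^ 2 + 1) = Gamma (a / 2) * Gamma (1 - a / 2) / 2 := by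
  have hq : -1 < a - 1 := by linarith
  have hb : 0 < 1 - a / 2 := by linarith
  set g : ℝ → ℝ → ℝ := fun t x => exp (-t) * (x ^ (a - 1) * exp (-t * x ^ 2))
  have hinner : ∀ t > 0, ∫ x in Ioi (0 : ℝ), g t x
      = Gamma (a / 2) / 2 * (exp (-t) * t ^ (1 - a / 2 - 1)) := by
    intro t ht
    rw [integral_const_mul, integral_rpow_mul_exp_neg_mul_sq ha0 ht,
      show 1 - a / 2 - 1 = -(a / 2) by ring]
    ring
  have hintegrable : Integrable (Function.uncurry g)
      ((volume.restrict (Ioi 0)).prod (volume.restrict (Ioi 0))) := by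
    refine (integrable_prod_iff (by fun_prop)).2 ⟨?_, ?_⟩
    · filter_upwards [ae_restrict_mem measurableSet_Ioi] with t ht using
        ((integrableOn_rpow_mul_exp_neg_mul_sq ht hq).const_mul (exp (-t)) :)
    · refine ((GammaIntegral_convergent hb).const_mul (Gamma (a / 2) / 2)).congr ?_
      filter_upwards [ae_restrict_mem measurableSet_Ioi] with t ht
      rw [← hinner t ht]
      refine setIntegral_congr_fun measurableSet_Ioi fun x (hx : 0 < x) => ?_
      exact (norm_of_nonneg (by positivity)).symm
  calc ∫ x in Ioi (0 : ℝ), x ^ (a - 1) / (x ^ 2 + 1)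
      = ∫ x in Ioi (0 : ℝ), ∫ t in Ioi (0 : ℝ), g t x := by
        refine setIntegral_congr_fun measurableSet_Ioi fun x (hx : 0 < x) => ?_
        have hexp : ∀ t, g t x = x ^ (a - 1) * exp (-(x ^ 2 + 1) * t) := fun t => by
          simp only [g]
          rw [mul_left_comm, ← exp_add]
          ring_nf
        have hc : -(x ^ 2 + 1) < 0 := by linarith [sq_nonneg x]
        simp_rw [hexp, integral_const_mul, integral_exp_mul_Ioi hc 0, mul_zero, exp_zero,
          neg_div_neg_eq, mul_one_div]
    _ = ∫ t in Ioi (0 : ℝ), ∫ x in Ioi (0 : ℝ), g t x := (integral_integral_swap hintegrable).symm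
    _ = Gamma (a / 2) * Gamma (1 - a / 2) / 2 := by
        rw [setIntegral_congr_fun measurableSet_Ioi hinner, integral_const_mul,
          ← Gamma_eq_integral hb]
        ring

lemma cos_mul_Gamma_mul_Gamma_one_sub {a : ℝ} (hcos : cos (a * π / 2) ≠ 0) :
    cos (a * π / 2) * (Gamma a * Gamma (1 - a)) = Gamma (a / 2) * Gamma (1 - a / 2) / 2 := by
  rw [Gamma_mul_Gamma_one_sub, Gamma_mul_Gamma_one_sub, show π * a = 2 * (a * π / 2) by ring,
    show π * (a / 2) = a * π / 2 by ring, sin_two_mul]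
  by_cases hsin : sin (a * π / 2) = 0
  · simp [hsin] -- both sides are the junk value `π / 0 = 0`
  · field_simp

theorem stmt12 (a : ℝ) (ha1 : 1 < a) (ha2 : a < 2) :
    IntegrableOn (fun y : ℝ => Real.sin y * y ^ (-a)) (Set.Ioi 0) ∧
    (∫ y in Set.Ioi (0 : ℝ), Real.sin y * y ^ (-a)) =
      Real.cos (a * π / 2) * Real.Gamma (1 - a) := by
  refine ⟨integrableOn_sin_mul_rpow_neg ha1 ha2,
    mul_left_cancel₀ (Gamma_pos_of_pos (by linarith)).ne' ?_⟩
  have hcos : cos (a * π / 2) ≠ 0 :=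
    (cos_neg_of_pi_div_two_lt_of_lt (by nlinarith [pi_pos]) (by nlinarith [pi_pos])).ne
  rw [Gamma_mul_integral_sin_mul_rpow_neg ha1 ha2, integral_rpow_div_sq_add_one (by linarith) ha2,
    ← cos_mul_Gamma_mul_Gamma_one_sub hcos]
  ring
end

section
/- For every real a with 1 < a < 2, the Lebesgue integral ∫_ℝ (1 − cos(y))·|y|^{−1−a} dy is finite and equals (2/a)·cos(aπ/2)·Γ(1 − a), where Γ is the Gamma function. Consequently, Γ(1 + a)·∫_ℝ (1 − cos(y))·|y|^{−1−a} dy = π·csc(aπ/2). -/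
/-!
Since `Γ(1 + a) y^(-1-a) = ∫₀^∞ t^a e^(-ty) dt` and
`∫₀^∞ (1 - cos y) e^(-ty) dy = 1 / (t (1 + t²))`, Fubini's theorem turns
`Γ(1 + a) ∫₀^∞ (1 - cos y) y^(-1-a) dy` into `∫₀^∞ t^(a-1) / (1 + t²) dt`. The substitutions
`t² = u` and `u = x / (1 - x)` reduce this to the Beta integral
`B(a/2, 1 - a/2) = π / sin (π a / 2)`, so the even integrand integrates over `ℝ` to
`π / (Γ(1 + a) sin (π a / 2))`. This equals `(2/a) cos (π a / 2) Γ(1 - a)` by `Γ(1 + a) = a Γ(a)`,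
the reflection formula and `sin (π a) = 2 sin (π a / 2) cos (π a / 2)`.
-/

noncomputable section
open Real MeasureTheory Set

lemma intervalIntegral_rpow_mul_one_sub_rpow {u v : ℝ} (hu : 0 < u) (hv : 0 < v) :
    ∫ x in (0:ℝ)..1, x ^ (u - 1) * (1 - x) ^ (v - 1) = Gamma u * Gamma v / Gamma (u + v) := by
  have h := Complex.betaIntegral_eq_Gamma_mul_div u v (by simpa) (by simpa)
  rw [Complex.betaIntegral, ← Complex.ofReal_add, Complex.Gamma_ofReal, Complex.Gamma_ofReal,
    Complex.Gamma_ofReal, ← Complex.ofReal_mul, ← Complex.ofReal_div] at h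
  refine Complex.ofReal_injective (intervalIntegral.integral_ofReal.symm.trans
    ((intervalIntegral.integral_congr fun x hx => ?_).trans h))
  rw [uIcc_of_le zero_le_one] at hx
  simp only [Complex.ofReal_mul, Complex.ofReal_cpow hx.1, Complex.ofReal_cpow (sub_nonneg.2 hx.2)]
  push_cast
  rfl

lemma image_div_one_sub_Ioo : (fun y : ℝ => y / (1 - y)) '' Ioo 0 1 = Ioi 0 := by
  ext x
  constructor
  · rintro ⟨y, ⟨hy0, hy1⟩, rfl⟩
    exact div_pos hy0 (sub_pos.2 hy1)
  · intro hx
    have hx0 : (0:ℝ) < x := hx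
    refine ⟨x / (1 + x), ⟨by positivity, (div_lt_one (by positivity)).2 (by linarith)⟩, ?_⟩
    field_simp
    ring

lemma integral_rpow_div_one_add_rpow_Ioi {u v : ℝ} (hu : 0 < u) (hv : 0 < v) :
    ∫ x in Ioi 0, x ^ (u - 1) / (1 + x) ^ (u + v) = Gamma u * Gamma v / Gamma (u + v) := by
  have hderiv : ∀ y ∈ Ioo (0:ℝ) 1,
      HasDerivWithinAt (fun y => y / (1 - y)) ((1 - y) ^ 2)⁻¹ (Ioo 0 1) y := by
    intro y hy
    have hne : 1 - y ≠ 0 := (sub_pos.2 hy.2).ne'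
    refine (((hasDerivAt_id y).div ((hasDerivAt_id y).const_sub 1) hne).congr_deriv ?_)
      |>.hasDerivWithinAt
    simp only [id]
    field_simp
    ring
  have hinj : InjOn (fun y : ℝ => y / (1 - y)) (Ioo 0 1) := by
    intro y hy z hz h
    have := (sub_pos.2 hy.2).ne'
    have := (sub_pos.2 hz.2).ne'
    field_simp at h
    linarith
  have hintegrand : ∀ y ∈ Ioo (0:ℝ) 1, |((1 - y) ^ 2)⁻¹| • ((y / (1 - y)) ^ (u - 1) /
      (1 + y / (1 - y)) ^ (u + v)) = y ^ (u - 1) * (1 - y) ^ (v - 1) := by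
    intro y ⟨hy0, hy1⟩
    have hb : 0 < 1 - y := sub_pos.2 hy1
    have hsplit : (1 - y) ^ (u + v) = (1 - y) ^ (u - 1) * (1 - y) ^ (v - 1) * (1 - y) ^ 2 := by
      rw [← rpow_natCast, ← rpow_add hb, ← rpow_add hb]
      push_cast
      ring_nf
    rw [show 1 + y / (1 - y) = (1 - y)⁻¹ by field_simp; ring, smul_eq_mul,
      abs_of_pos (by positivity), div_rpow hy0.le hb.le, inv_rpow hb.le, hsplit]
    have := (rpow_pos_of_pos hb (u - 1)).ne'
    have := (rpow_pos_of_pos hb (v - 1)).ne'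
    field_simp
  rw [← image_div_one_sub_Ioo, integral_image_eq_integral_abs_deriv_smul measurableSet_Ioo hderiv
    hinj, setIntegral_congr_fun measurableSet_Ioo hintegrand, ← integral_Ioc_eq_integral_Ioo,
    ← intervalIntegral.integral_of_le zero_le_one, intervalIntegral_rpow_mul_one_sub_rpow hu hv]

lemma integral_rpow_div_one_add_Ioi {s : ℝ} (hs0 : 0 < s) (hs1 : s < 1) :
    ∫ x in Ioi 0, x ^ (s - 1) / (1 + x) = π / sin (π * s) := by
  have h := integral_rpow_div_one_add_rpow_Ioi hs0 (sub_pos.2 hs1)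
  simpa only [add_sub_cancel, rpow_one, Gamma_one, div_one, Gamma_mul_Gamma_one_sub] using h

lemma integral_rpow_div_one_add_sq_Ioi {s : ℝ} (hs0 : 0 < s) (hs2 : s < 2) :
    ∫ t in Ioi 0, t ^ (s - 1) / (1 + t ^ 2) = π / (2 * sin (π * s / 2)) := by
  have h := integral_comp_rpow_Ioi (fun x => x ^ (s / 2 - 1) / (1 + x)) two_ne_zero
  have hintegrand : ∀ t ∈ Ioi (0:ℝ), (|(2:ℝ)| * t ^ ((2:ℝ) - 1)) •
      ((t ^ (2:ℝ)) ^ (s / 2 - 1) / (1 + t ^ (2:ℝ))) = 2 * (t ^ (s - 1) / (1 + t ^ 2)) := by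
    intro t (ht : 0 < t)
    rw [smul_eq_mul, ← rpow_mul ht.le, rpow_two, abs_two]
    rw [show (2:ℝ) - 1 = 1 by norm_num, rpow_one, show 2 * (s / 2 - 1) = s - 1 - 1 by ring,
      rpow_sub_one ht.ne']
    field_simp
  rw [setIntegral_congr_fun measurableSet_Ioi hintegrand, integral_const_mul,
    integral_rpow_div_one_add_Ioi (by positivity) (by linarith)] at h
  rw [mul_div_assoc, mul_comm 2, ← div_div, ← h]
  ring

lemma integrableOn_rpow_div_one_add_sq_Ioi {s : ℝ} (hs0 : 0 < s) (hs2 : s < 2) :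
    IntegrableOn (fun t : ℝ => t ^ (s - 1) / (1 + t ^ 2)) (Ioi 0) := by
  refine Integrable.of_integral_ne_zero ?_
  rw [integral_rpow_div_one_add_sq_Ioi hs0 hs2]
  have : 0 < sin (π * s / 2) := sin_pos_of_pos_of_lt_pi (by positivity) (by nlinarith [pi_pos])
  positivity

lemma integral_cos_mul_exp_neg_mul_Ioi {t : ℝ} (ht : 0 < t) :
    IntegrableOn (fun y => cos y * exp (-(t * y))) (Ioi 0) ∧
      ∫ y in Ioi 0, cos y * exp (-(t * y)) = t / (1 + t ^ 2) := by
  have hre : (-t + Complex.I).re < 0 := by simpa using ht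
  have hcos : (fun y : ℝ => cos y * exp (-(t * y))) =
      fun y : ℝ => (Complex.exp ((-t + Complex.I) * y)).re := by
    ext y
    simp [Complex.exp_re, mul_comm]
  have hint := integrableOn_exp_mul_complex_Ioi hre 0
  rw [hcos]
  refine ⟨hint.re, ?_⟩
  have := integral_re hint
  simp only [RCLike.re_to_complex] at this
  rw [this, integral_exp_mul_complex_Ioi hre, Complex.ofReal_zero, mul_zero, Complex.exp_zero,
    Complex.div_re, Complex.normSq_apply]
  simp only [Complex.neg_re, Complex.neg_im, Complex.one_re, Complex.one_im, Complex.add_re,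
    Complex.add_im, Complex.ofReal_re, Complex.ofReal_im, Complex.I_re, Complex.I_im]
  field_simp
  ring

lemma integral_one_sub_cos_mul_exp_neg_mul_Ioi {t : ℝ} (ht : 0 < t) :
    IntegrableOn (fun y => (1 - cos y) * exp (-(t * y))) (Ioi 0) ∧
      ∫ y in Ioi 0, (1 - cos y) * exp (-(t * y)) = 1 / (t * (1 + t ^ 2)) := by
  obtain ⟨hcos_int, hcos⟩ := integral_cos_mul_exp_neg_mul_Ioi ht
  have hexp_int : IntegrableOn (fun y => exp (-(t * y))) (Ioi 0) := by
    simpa only [neg_mul] using integrableOn_exp_mul_Ioi (neg_neg_of_pos ht) 0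
  have hexp : ∫ y in Ioi 0, exp (-(t * y)) = 1 / t := by
    simpa [neg_mul] using integral_exp_mul_Ioi (neg_neg_of_pos ht) 0
  simp only [sub_mul, one_mul]
  refine ⟨hexp_int.sub hcos_int, ?_⟩
  rw [integral_sub hexp_int hcos_int, hexp, hcos]
  field_simp
  ring

lemma Gamma_one_add_mul_integral_one_sub_cos_mul_rpow_Ioi {a : ℝ} (ha0 : 0 < a) (ha2 : a < 2) :
    Gamma (1 + a) * ∫ y in Ioi 0, (1 - cos y) * y ^ (-1 - a) = π / (2 * sin (π * a / 2)) := by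
  set μ := volume.restrict (Ioi (0:ℝ))
  set F : ℝ → ℝ → ℝ := fun t y => t ^ a * ((1 - cos y) * exp (-(t * y)))
  have hF_nonneg : ∀ t ∈ Ioi (0:ℝ), ∀ y, 0 ≤ F t y := fun t ht y =>
    mul_nonneg (rpow_nonneg (le_of_lt ht) a)
      (mul_nonneg (sub_nonneg.2 (cos_le_one y)) (exp_pos _).le)
  have hF_y : ∀ t ∈ Ioi (0:ℝ),
      Integrable (F t) μ ∧ ∫ y, F t y ∂μ = t ^ (a - 1) / (1 + t ^ 2) := by
    intro t (ht : 0 < t)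
    obtain ⟨hint, hval⟩ := integral_one_sub_cos_mul_exp_neg_mul_Ioi ht
    refine ⟨hint.const_mul _, ?_⟩
    rw [integral_const_mul, hval, rpow_sub_one ht.ne']
    field_simp
  have hF_t : ∀ y ∈ Ioi (0:ℝ),
      ∫ t, F t y ∂μ = Gamma (1 + a) * ((1 - cos y) * y ^ (-1 - a)) := by
    intro y (hy : 0 < y)
    have h := integral_rpow_mul_exp_neg_mul_Ioi (a := 1 + a) (by linarith) hy
    rw [add_sub_cancel_left, one_div, inv_rpow hy.le, ← rpow_neg hy.le, neg_add'] at h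
    calc ∫ t, F t y ∂μ = ∫ t in Ioi 0, (1 - cos y) * (t ^ a * exp (-(y * t))) := by
          congr 1 with t
          simp only [F, mul_comm t y]
          ring
      _ = Gamma (1 + a) * ((1 - cos y) * y ^ (-1 - a)) := by
          rw [integral_const_mul, h]
          ring
  have hF_int : Integrable (Function.uncurry F) (μ.prod μ) := by
    rw [integrable_prod_iff (by fun_prop)]
    refine ⟨(ae_restrict_mem measurableSet_Ioi).mono fun t ht => (hF_y t ht).1,
      (integrableOn_rpow_div_one_add_sq_Ioi ha0 ha2).congr ?_⟩
    filter_upwards [ae_restrict_mem measurableSet_Ioi] with t ht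
    simp only [Function.uncurry_apply_pair, norm_of_nonneg (hF_nonneg t ht _), (hF_y t ht).2]
  calc Gamma (1 + a) * ∫ y in Ioi 0, (1 - cos y) * y ^ (-1 - a)
      = ∫ y, ∫ t, F t y ∂μ ∂μ := by
        rw [← integral_const_mul]
        exact (setIntegral_congr_fun measurableSet_Ioi hF_t).symm
    _ = ∫ t, ∫ y, F t y ∂μ ∂μ := (integral_integral_swap hF_int).symm
    _ = ∫ t in Ioi 0, t ^ (a - 1) / (1 + t ^ 2) :=
        setIntegral_congr_fun measurableSet_Ioi fun t ht => (hF_y t ht).2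
    _ = π / (2 * sin (π * a / 2)) := integral_rpow_div_one_add_sq_Ioi ha0 ha2

lemma Gamma_one_add_mul_integral_one_sub_cos_mul_abs_rpow {a : ℝ} (ha0 : 0 < a) (ha2 : a < 2) :
    Integrable (fun y : ℝ => (1 - cos y) * |y| ^ (-1 - a)) ∧
      Gamma (1 + a) * ∫ y, (1 - cos y) * |y| ^ (-1 - a) = π / sin (π * a / 2) := by
  have hsin : 0 < sin (π * a / 2) :=
    sin_pos_of_pos_of_lt_pi (by positivity) (by nlinarith [pi_pos])
  have hval : Gamma (1 + a) * ∫ y, (1 - cos y) * |y| ^ (-1 - a) = π / sin (π * a / 2) := by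
    have h := integral_comp_abs (f := fun y => (1 - cos y) * y ^ (-1 - a))
    simp only [cos_abs] at h
    rw [h, mul_left_comm, Gamma_one_add_mul_integral_one_sub_cos_mul_rpow_Ioi ha0 ha2]
    field_simp
  refine ⟨Integrable.of_integral_ne_zero fun h0 => ?_, hval⟩
  rw [h0, mul_zero] at hval
  exact (div_pos pi_pos hsin).ne hval

lemma Gamma_one_add_mul_cos_mul_Gamma_one_sub {a : ℝ} (ha : sin (π * a) ≠ 0) :
    Gamma (1 + a) * (2 / a * cos (π * a / 2) * Gamma (1 - a)) = π / sin (π * a / 2) := by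
  have ha0 : a ≠ 0 := by rintro rfl; simp at ha
  have hdouble : sin (π * a) = 2 * sin (π * a / 2) * cos (π * a / 2) := by
    rw [← sin_two_mul]; ring_nf
  have hcos : cos (π * a / 2) ≠ 0 := fun h => ha (by rw [hdouble, h, mul_zero])
  have hsin : sin (π * a / 2) ≠ 0 := fun h => ha (by rw [hdouble, h, mul_zero, zero_mul])
  rw [add_comm, Gamma_add_one ha0,
    show a * Gamma a * (2 / a * cos (π * a / 2) * Gamma (1 - a)) =
      2 * cos (π * a / 2) * (Gamma a * Gamma (1 - a)) by field_simp,
    Gamma_mul_Gamma_one_sub, hdouble]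
  field_simp

theorem stmt13 (a : ℝ) (ha1 : 1 < a) (ha2 : a < 2) :
    Integrable (fun y : ℝ => (1 - Real.cos y) * |y| ^ (-1 - a)) ∧
    (∫ y : ℝ, (1 - Real.cos y) * |y| ^ (-1 - a)) =
      (2 / a) * Real.cos (a * π / 2) * Real.Gamma (1 - a) ∧
    Real.Gamma (1 + a) * (∫ y : ℝ, (1 - Real.cos y) * |y| ^ (-1 - a)) =
      π * (1 / Real.sin (a * π / 2)) := by
  obtain ⟨hint, hval⟩ := Gamma_one_add_mul_integral_one_sub_cos_mul_abs_rpow (by linarith) ha2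
  have hsin : sin (π * a) < 0 := by
    rw [← sin_sub_two_pi]
    exact sin_neg_of_neg_of_neg_pi_lt (by nlinarith [pi_pos]) (by nlinarith [pi_pos])
  have hGamma : Gamma (1 + a) ≠ 0 := (Gamma_pos_of_pos (by linarith)).ne'
  rw [mul_comm a π, ← div_eq_mul_one_div]
  exact ⟨hint, mul_left_cancel₀ hGamma
    (hval.trans (Gamma_one_add_mul_cos_mul_Gamma_one_sub hsin.ne).symm), hval⟩
end
end

section
/- For every real τ with 0 ≤ τ < 1, the Lebesgue integral ∫_ℝ (k²/(k⁴ + 1))·|k|^{−τ} dk is finite and equals (π/2)·csc(πτ/4 + π/4). -/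
/-!
Substituting `x ↦ x⁴` and using evenness, the integral is twice the Mellin-type integral
`∫₀^∞ x^(s-1) / (1 + x^p) dx = π / (p sin (π s / p))` with `s = 3 - τ`, `p = 4`. The case `p = 1`
is the Beta integral `∫₀^∞ x^(s-1) / (1 + x) dx = Γ(s) Γ(1 - s)`, obtained by writing
`1 / (1 + x) = ∫₀^∞ e^{-(1+x)t} dt` and exchanging the order of integration; Euler's reflection
formula turns it into `π / sin (π s)`.
-/

open Real MeasureTheory Set Filter Asymptotics

lemma integrable_comp_abs_of_integrableOn_Ioi {E : Type*} [NormedAddCommGroup E] {f : ℝ → E}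
    (hf : IntegrableOn f (Ioi 0)) : Integrable fun x : ℝ => f |x| := by
  have hF : Integrable ((Ioi 0).indicator f) := (integrable_indicator_iff measurableSet_Ioi).2 hf
  refine (hF.add hF.comp_neg).congr ?_
  filter_upwards [Measure.ae_ne volume 0] with x hx
  rcases hx.lt_or_gt with hx | hx
  · simp [hx, hx.not_gt, abs_of_neg hx]
  · simp [hx, hx.not_gt, abs_of_pos hx]

lemma integrableOn_rpow_mul_inv_one_add {s : ℝ} (hs₀ : 0 < s) (hs₁ : s < 1) :
    IntegrableOn (fun x : ℝ => x ^ (s - 1) * (1 + x)⁻¹) (Ioi 0) := by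
  refine mellin_convergent_of_isBigO_scalar (a := 1) (b := 0) ?_ ?_ hs₁ ?_ hs₀
  · refine ContinuousOn.locallyIntegrableOn ?_ measurableSet_Ioi
    exact (continuousOn_const.add continuousOn_id).inv₀ fun x hx => (add_pos one_pos hx).ne'
  · refine IsBigO.of_bound 1 ?_
    filter_upwards [eventually_gt_atTop 0] with x hx
    rw [rpow_neg_one, one_mul, norm_inv, norm_inv, Real.norm_of_nonneg (by positivity),
      Real.norm_of_nonneg hx.le]
    exact inv_anti₀ hx (by linarith)
  · refine IsBigO.of_bound 1 ?_
    filter_upwards [self_mem_nhdsWithin] with x (hx : 0 < x)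
    rw [neg_zero, rpow_zero, norm_one, one_mul, norm_inv, Real.norm_of_nonneg (by positivity)]
    exact inv_le_one_of_one_le₀ (by linarith)

lemma integral_exp_neg_mul_Ioi_zero {c : ℝ} (hc : 0 < c) :
    ∫ t in Ioi (0 : ℝ), exp (-(c * t)) = c⁻¹ := by
  simpa [Gamma_one] using integral_rpow_mul_exp_neg_mul_Ioi one_pos hc

lemma integral_rpow_mul_inv_one_add {s : ℝ} (hs₀ : 0 < s) (hs₁ : s < 1) :
    ∫ x in Ioi (0 : ℝ), x ^ (s - 1) * (1 + x)⁻¹ = π / sin (π * s) := by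
  set F : ℝ → ℝ → ℝ := fun x t => x ^ (s - 1) * exp (-((1 + x) * t))
  have integral_F_dt : ∀ x ∈ Ioi (0 : ℝ), ∫ t in Ioi 0, F x t = x ^ (s - 1) * (1 + x)⁻¹ :=
    fun x (hx : 0 < x) => by
      rw [integral_const_mul, integral_exp_neg_mul_Ioi_zero (by positivity)]
  have integral_F_dx : ∀ t ∈ Ioi (0 : ℝ),
      ∫ x in Ioi 0, F x t = Gamma s * (t ^ ((1 - s) - 1) * exp (-(1 * t))) :=
    fun t (ht : 0 < t) => by
      have hsplit : ∀ x, F x t = exp (-t) * (x ^ (s - 1) * exp (-(t * x))) := fun x => by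
        simp only [F]; rw [mul_left_comm, ← exp_add]; congr 2; ring
      simp_rw [hsplit]
      rw [integral_const_mul, integral_rpow_mul_exp_neg_mul_Ioi hs₀ ht, one_div, inv_rpow ht.le,
        ← rpow_neg ht.le, one_mul]
      ring_nf
  have hF : Integrable (Function.uncurry F)
      ((volume.restrict (Ioi 0)).prod (volume.restrict (Ioi 0))) := by
    have hmeas : Measurable (Function.uncurry F) := by unfold F; fun_prop
    refine (integrable_prod_iff hmeas.aestronglyMeasurable).2 ⟨?_, ?_⟩
    · filter_upwards [ae_restrict_mem measurableSet_Ioi] with x (hx : 0 < x)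
      have hexp : IntegrableOn (fun t => exp (-((1 + x) * t))) (Ioi 0) := by
        simpa only [neg_mul] using exp_neg_integrableOn_Ioi 0 (by positivity : 0 < 1 + x)
      exact hexp.const_mul (x ^ (s - 1))
    · refine (integrableOn_rpow_mul_inv_one_add hs₀ hs₁).congr_fun
        (fun x (hx : 0 < x) => ?_) measurableSet_Ioi
      show x ^ (s - 1) * (1 + x)⁻¹ = _
      rw [← integral_F_dt x hx]
      exact setIntegral_congr_fun measurableSet_Ioi fun t _ => (norm_of_nonneg (by positivity)).symm
  calc ∫ x in Ioi 0, x ^ (s - 1) * (1 + x)⁻¹ = ∫ x in Ioi 0, ∫ t in Ioi 0, F x t :=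
        (setIntegral_congr_fun measurableSet_Ioi integral_F_dt).symm
    _ = ∫ t in Ioi 0, ∫ x in Ioi 0, F x t := integral_integral_swap hF
    _ = ∫ t in Ioi 0, Gamma s * (t ^ ((1 - s) - 1) * exp (-(1 * t))) :=
        setIntegral_congr_fun measurableSet_Ioi integral_F_dx
    _ = Gamma s * Gamma (1 - s) := by
        rw [integral_const_mul, integral_rpow_mul_exp_neg_mul_Ioi (by linarith) one_pos]
        simp
    _ = π / sin (π * s) := Gamma_mul_Gamma_one_sub s

lemma rpow_sub_one_mul_rpow_rpow_div_sub_one {x : ℝ} (hx : 0 < x) {p : ℝ} (hp : p ≠ 0) (s : ℝ) :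
    x ^ (p - 1) * (x ^ p) ^ (s / p - 1) = x ^ (s - 1) := by
  rw [← rpow_mul hx.le, ← rpow_add hx]
  congr 1
  field_simp
  ring

lemma integrableOn_rpow_mul_inv_one_add_rpow {s p : ℝ} (hs : 0 < s) (hsp : s < p) :
    IntegrableOn (fun x : ℝ => x ^ (s - 1) * (1 + x ^ p)⁻¹) (Ioi 0) := by
  have hp : 0 < p := hs.trans hsp
  have := (integrableOn_Ioi_comp_rpow_iff' _ hp.ne').2
    (integrableOn_rpow_mul_inv_one_add (div_pos hs hp) ((div_lt_one hp).2 hsp))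
  refine this.congr_fun (fun x (hx : 0 < x) => ?_) measurableSet_Ioi
  dsimp only
  rw [smul_eq_mul, ← mul_assoc, rpow_sub_one_mul_rpow_rpow_div_sub_one hx hp.ne']

lemma integral_rpow_mul_inv_one_add_rpow {s p : ℝ} (hs : 0 < s) (hsp : s < p) :
    ∫ x in Ioi (0 : ℝ), x ^ (s - 1) * (1 + x ^ p)⁻¹ = π / (p * sin (π * s / p)) := by
  have hp : 0 < p := hs.trans hsp
  have := integral_comp_rpow_Ioi_of_pos hp
    (g := fun y : ℝ => y ^ (s / p - 1) * (1 + y)⁻¹)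
  rw [integral_rpow_mul_inv_one_add (div_pos hs hp) ((div_lt_one hp).2 hsp), ← mul_div_assoc]
    at this
  rw [div_mul_eq_div_div_swap, ← this, eq_div_iff hp.ne', mul_comm, ← integral_const_mul]
  refine setIntegral_congr_fun measurableSet_Ioi fun x (hx : 0 < x) => ?_
  rw [smul_eq_mul, mul_assoc, ← mul_assoc (x ^ (p - 1)),
    rpow_sub_one_mul_rpow_rpow_div_sub_one hx hp.ne']

theorem stmt14 (τ : ℝ) (hτ1 : 0 ≤ τ) (hτ2 : τ < 1) :
    Integrable (fun k : ℝ => k ^ 2 / (k ^ 4 + 1) * |k| ^ (-τ)) ∧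
    (∫ k : ℝ, k ^ 2 / (k ^ 4 + 1) * |k| ^ (-τ)) =
      (π / 2) * (1 / Real.sin (π * τ / 4 + π / 4)) := by
  have h_abs : (fun k : ℝ => k ^ 2 / (k ^ 4 + 1) * |k| ^ (-τ)) =
      fun k => |k| ^ ((3 - τ) - 1) * (1 + |k| ^ (4 : ℝ))⁻¹ := by
    funext k
    have h4 : |k| ^ 4 = k ^ 4 := by rw [pow_abs, abs_of_nonneg (by positivity)]
    rw [show (3 - τ) - 1 = 2 + -τ by ring, rpow_add' (abs_nonneg k) (by linarith), rpow_ofNat,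
      rpow_ofNat, sq_abs, h4]
    ring
  have hs : 0 < 3 - τ := by linarith
  have hsp : 3 - τ < 4 := by linarith
  refine ⟨h_abs ▸ integrable_comp_abs_of_integrableOn_Ioi
    (integrableOn_rpow_mul_inv_one_add_rpow hs hsp), ?_⟩
  rw [h_abs, integral_comp_abs (f := fun x => x ^ ((3 - τ) - 1) * (1 + x ^ (4 : ℝ))⁻¹),
    integral_rpow_mul_inv_one_add_rpow hs hsp,
    show π * (3 - τ) / 4 = π - (π * τ / 4 + π / 4) by ring, sin_pi_sub]
  ring
end
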